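/- Let R > 0 and let g : ℝ → ℝ be integrable with support contained in [−R, R]. Then for every complex number z with |z| > R, the function u ↦ g(u)/(z − u) is integrable and ∫_ℝ g(u)/(z − u) du = Σ_{j=0}^∞ z^{−j−1} ∫_ℝ u^j g(u) du, the series on the right converging absolutely. -/

import Mathlib

open MeasureTheory

/-! For `|u| ≤ R < |z|` the kernel expands as the geometric series
`1 / (z - u) = ∑ⱼ uʲ / zʲ⁺¹`, whose `j`-th term is bounded by `(R / |z|)ʲ / |z|` on the support
of `g`. Multiplying by `g` gives a summable family of integrable majorants, so dominated
convergence lets the integral be taken term by term, producing the moments. -/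

theorem hasSum_inv_pow_succ_mul_pow {𝕜 : Type*} [NontriviallyNormedField 𝕜] [CompleteSpace 𝕜]
    {z u : 𝕜} (hu : ‖u‖ < ‖z‖) :
    HasSum (fun j : ℕ => (z ^ (j + 1))⁻¹ * u ^ j) (z - u)⁻¹ := by
  have hz : z ≠ 0 := norm_pos_iff.mp ((norm_nonneg u).trans_lt hu)
  have hratio : ‖u / z‖ < 1 := by rwa [norm_div, div_lt_one (norm_pos_iff.mpr hz)]
  have hterm (j : ℕ) : z⁻¹ * (u / z) ^ j = (z ^ (j + 1))⁻¹ * u ^ j := by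
    rw [div_pow, pow_succ', mul_inv, div_eq_mul_inv, mul_comm (u ^ j), mul_assoc]
  have hlimit : z⁻¹ * (1 - u / z)⁻¹ = (z - u)⁻¹ := by
    rw [← mul_inv, mul_sub, mul_one, mul_div_cancel₀ u hz]
  simpa only [hterm, hlimit] using (hasSum_geometric_of_norm_lt_one hratio).mul_left z⁻¹

namespace CauchyTransform

variable {μ : Measure ℝ} {g : ℝ → ℂ} {R : ℝ} {z : ℂ}

theorem norm_ofReal_le_of_ne_zero (hsupp : Function.support g ⊆ Set.Icc (-R) R) {u : ℝ}
    (hu : g u ≠ 0) : ‖(u : ℂ)‖ ≤ R := by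
  rw [Complex.norm_real, Real.norm_eq_abs]
  exact abs_le.mpr (hsupp hu)

theorem hasSum_inv_pow_succ_mul_pow_mul (hsupp : Function.support g ⊆ Set.Icc (-R) R)
    (hz : R < ‖z‖) (u : ℝ) :
    HasSum (fun j : ℕ => (z ^ (j + 1))⁻¹ * ((u : ℂ) ^ j * g u)) (g u / (z - u)) := by
  by_cases hu : g u = 0
  · simp [hu, hasSum_zero]
  simpa only [← mul_assoc, div_eq_inv_mul, mul_comm _ (g u)] using
    (hasSum_inv_pow_succ_mul_pow ((norm_ofReal_le_of_ne_zero hsupp hu).trans_lt hz)).mul_right (g u)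

theorem norm_inv_pow_succ_mul_pow_mul_le (hsupp : Function.support g ⊆ Set.Icc (-R) R)
    (j : ℕ) (u : ℝ) :
    ‖(z ^ (j + 1))⁻¹ * ((u : ℂ) ^ j * g u)‖ ≤ (R / ‖z‖) ^ j * (‖z‖⁻¹ * ‖g u‖) := by
  by_cases hu : g u = 0
  · simp [hu]
  have hu_le := norm_ofReal_le_of_ne_zero hsupp hu
  rw [norm_mul, norm_mul, norm_inv, norm_pow, norm_pow, div_pow, pow_succ, mul_inv]
  calc (‖z‖ ^ j)⁻¹ * ‖z‖⁻¹ * (‖(u : ℂ)‖ ^ j * ‖g u‖)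
      ≤ (‖z‖ ^ j)⁻¹ * ‖z‖⁻¹ * (R ^ j * ‖g u‖) := by gcongr
    _ = R ^ j / ‖z‖ ^ j * (‖z‖⁻¹ * ‖g u‖) := by ring

theorem norm_div_sub_le (hsupp : Function.support g ⊆ Set.Icc (-R) R) (hz : R < ‖z‖) (u : ℝ) :
    ‖g u / (z - u)‖ ≤ (‖z‖ - R)⁻¹ * ‖g u‖ := by
  by_cases hu : g u = 0
  · simp [hu]
  have hdist : ‖z‖ - R ≤ ‖z - u‖ :=
    (sub_le_sub_left (norm_ofReal_le_of_ne_zero hsupp hu) _).trans (norm_sub_norm_le _ _)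
  rw [norm_div, div_eq_inv_mul]
  gcongr

theorem aestronglyMeasurable_inv_pow_succ_mul_pow_mul (hg : AEStronglyMeasurable g μ) (j : ℕ) :
    AEStronglyMeasurable (fun u : ℝ => (z ^ (j + 1))⁻¹ * ((u : ℂ) ^ j * g u)) μ :=
  ((Complex.continuous_ofReal.pow j).aestronglyMeasurable.mul hg).const_mul _

theorem integrable_div_sub (hg : Integrable g μ) (hsupp : Function.support g ⊆ Set.Icc (-R) R)
    (hz : R < ‖z‖) : Integrable (fun u : ℝ => g u / (z - u)) μ := by
  refine (hg.norm.const_mul (‖z‖ - R)⁻¹).mono' ?_ (.of_forall (norm_div_sub_le hsupp hz))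
  exact hg.aestronglyMeasurable.mul
    (Complex.measurable_ofReal.const_sub z).inv.aestronglyMeasurable

theorem norm_inv_pow_succ_mul_moment_le (hg : Integrable g μ)
    (hsupp : Function.support g ⊆ Set.Icc (-R) R) (j : ℕ) :
    ‖(z ^ (j + 1))⁻¹ * ∫ u, (u : ℂ) ^ j * g u ∂μ‖ ≤ (R / ‖z‖) ^ j * (‖z‖⁻¹ * ∫ u, ‖g u‖ ∂μ) := by
  rw [← integral_const_mul, ← integral_const_mul, ← integral_const_mul]
  exact norm_integral_le_of_norm_le ((hg.norm.const_mul _).const_mul _)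
    (.of_forall (norm_inv_pow_succ_mul_pow_mul_le hsupp j))

theorem summable_norm_inv_pow_succ_mul_moment (hg : Integrable g μ) (hR : 0 ≤ R)
    (hsupp : Function.support g ⊆ Set.Icc (-R) R) (hz : R < ‖z‖) :
    Summable (fun j : ℕ => ‖(z ^ (j + 1))⁻¹ * ∫ u, (u : ℂ) ^ j * g u ∂μ‖) := by
  have hz₀ : 0 < ‖z‖ := hR.trans_lt hz
  refine .of_nonneg_of_le (fun j => norm_nonneg _)
    (norm_inv_pow_succ_mul_moment_le hg hsupp) ?_
  exact (summable_geometric_of_lt_one (by positivity) ((div_lt_one hz₀).mpr hz)).mul_right _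

theorem hasSum_inv_pow_succ_mul_moment (hg : Integrable g μ) (hR : 0 ≤ R)
    (hsupp : Function.support g ⊆ Set.Icc (-R) R) (hz : R < ‖z‖) :
    HasSum (fun j : ℕ => (z ^ (j + 1))⁻¹ * ∫ u, (u : ℂ) ^ j * g u ∂μ)
      (∫ u, g u / (z - u) ∂μ) := by
  have hratio : R / ‖z‖ < 1 := (div_lt_one (hR.trans_lt hz)).mpr hz
  simp only [← integral_const_mul]
  refine hasSum_integral_of_dominated_convergence (fun j u => (R / ‖z‖) ^ j * (‖z‖⁻¹ * ‖g u‖))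
    (aestronglyMeasurable_inv_pow_succ_mul_pow_mul hg.aestronglyMeasurable)
    (fun j => .of_forall (norm_inv_pow_succ_mul_pow_mul_le hsupp j))
    (.of_forall fun u => (summable_geometric_of_lt_one (by positivity) hratio).mul_right _)
    ?_ (.of_forall (hasSum_inv_pow_succ_mul_pow_mul hsupp hz))
  simp only [tsum_mul_right]
  exact (hg.norm.const_mul _).const_mul _

end CauchyTransform

theorem cauchy_transform_laurent_expansion
    (R : ℝ) (hR : 0 < R) (g : ℝ → ℝ) (hg : Integrable g)
    (hsupp : Function.support g ⊆ Set.Icc (-R) R)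
    (z : ℂ) (hz : R < ‖z‖) :
    Integrable (fun u : ℝ => (g u : ℂ) / (z - (u : ℂ))) ∧
    Summable (fun j : ℕ => ‖(z ^ (j + 1))⁻¹ * ((∫ u : ℝ, u ^ j * g u : ℝ) : ℂ)‖) ∧
    (∫ u : ℝ, (g u : ℂ) / (z - (u : ℂ)))
      = ∑' j : ℕ, (z ^ (j + 1))⁻¹ * ((∫ u : ℝ, u ^ j * g u : ℝ) : ℂ) := by
  have hgℂ : Integrable (fun u => (g u : ℂ)) := hg.ofReal
  have hsuppℂ : Function.support (fun u => (g u : ℂ)) ⊆ Set.Icc (-R) R := by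
    simpa only [Function.support, ne_eq, Complex.ofReal_eq_zero] using hsupp
  have hmoment (j : ℕ) : ((∫ u : ℝ, u ^ j * g u : ℝ) : ℂ) = ∫ u : ℝ, (u : ℂ) ^ j * g u := by
    rw [← integral_complex_ofReal]
    push_cast
    rfl
  simp only [hmoment]
  exact ⟨CauchyTransform.integrable_div_sub hgℂ hsuppℂ hz,
    CauchyTransform.summable_norm_inv_pow_succ_mul_moment hgℂ hR.le hsuppℂ hz,
    (CauchyTransform.hasSum_inv_pow_succ_mul_moment hgℂ hR.le hsuppℂ hz).tsum_eq.symm⟩
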